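/- The Catalan matroid is balanced: for every n ≥ 1, every pair of disjoint subsets I, J ⊆ {1,…,2n}, and every pair of distinct elements e, f ∈ {1,…,2n} \ (I ∪ J), the subfamily 𝓓' = {S ∈ 𝓓(n) : I ⊆ S and S ∩ J = ∅} satisfies |𝓓'_e| · |𝓓'_f| ≥ |𝓓'| · |𝓓'_{ef}|, where 𝓓'_e = {S ∈ 𝓓' : e ∈ S} and 𝓓'_{ef} = {S ∈ 𝓓' : e, f ∈ S}. -/

import Mathlib

/-!
Count the paths of the minor by a transfer recursion on height profiles, one step at a time,
where a position of `I` (resp. `J`) allows only an up (resp. down) step. For `e < f`, split every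
path at position `e`: if `x h` counts the prefixes of length `e - 1` ending at height `h`, and
`u h`, `v h` count the completions from height `h` after position `e` with an up, resp. down,
step forced at `f`, then the four classes of paths according to the steps at `e` and `f` have
sizes `∑ x (h - 1) u h`, `∑ x (h - 1) v h`, `∑ x (h + 1) u h`, `∑ x (h + 1) v h`. One transfer
step preserves log-concavity of a profile and the TP₂ property of a pair of profiles, so `x` is
log-concave and `(u, v)` is TP₂, and a 2 × 2 Cauchy–Binet expansion gives
`|𝓓'_{ef}| · |𝓓'_{ēf̄}| ≤ |𝓓'_{ef̄}| · |𝓓'_{ēf}|`, which is equivalent to the claim.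
-/

open scoped Classical

/-- The set of Dyck paths of length `2n`, identified with their up-step sets:
`n`-element subsets `S` of `{1,…,2n}` with `2·|S ∩ {1,…,k}| ≥ k` for all `k`. -/
noncomputable def dyck (n : ℕ) : Finset (Finset ℕ) :=
  (Finset.Icc 1 (2 * n)).powerset.filter fun S =>
    S.card = n ∧ ∀ k ∈ Finset.Icc 1 (2 * n), k ≤ 2 * (S ∩ Finset.Icc 1 k).card

open Finset Function

namespace CatalanMatroid

def lowerShift (x : ℕ → ℕ) : ℕ → ℕ
  | 0 => 0
  | h + 1 => x h

/-- One step of a path: height `h` is reached from `h - 1` by an up step, counted with weight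
`a`, or from `h + 1` by a down step, counted with weight `b`. -/
def advance (a b : ℕ) (x : ℕ → ℕ) (h : ℕ) : ℕ :=
  a * lowerShift x h + b * x (h + 1)

lemma advance_eq_lowerShift (a b : ℕ) (x : ℕ → ℕ) :
    advance a b x = fun h => a * lowerShift x h + b * lowerShift x (h + 2) := rfl

lemma sum_lowerShift_mul {x y : ℕ → ℕ} {R : ℕ} (hy : y R = 0) :
    ∑ h ∈ range R, lowerShift x h * y h = ∑ h ∈ range R, x h * y (h + 1) := by
  cases R with
  | zero => simp
  | succ R =>
    rw [sum_range_succ' (fun h => lowerShift x h * y h), sum_range_succ (fun h => x h * y (h + 1))]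
    simp [lowerShift, hy]

lemma sum_advance_mul {a b R : ℕ} {x y : ℕ → ℕ} (hx : x R = 0) (hy : y R = 0) :
    ∑ h ∈ range R, advance a b x h * y h = ∑ h ∈ range R, x h * advance b a y h := by
  have hdown : ∑ h ∈ range R, x (h + 1) * y h = ∑ h ∈ range R, x h * lowerShift y h := by
    simp only [mul_comm (x _)]
    exact (sum_lowerShift_mul hx).symm
  simp only [advance, add_mul, mul_add, sum_add_distrib, mul_assoc, ← mul_sum,
    mul_left_comm (x _), sum_lowerShift_mul hy, hdown]
  ring

lemma advance_eq_zero_of_lt {a b m : ℕ} {x : ℕ → ℕ} (hx : ∀ h, m < h → x h = 0) {h : ℕ}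
    (hh : m + 1 < h) : advance a b x h = 0 := by
  obtain ⟨h, rfl⟩ : ∃ h', h = h' + 1 := ⟨h - 1, by omega⟩
  simp [advance, lowerShift, hx h (by omega), hx (h + 2) (by omega)]

lemma advance_eq_zero_of_mod_two_ne {a b r : ℕ} {x : ℕ → ℕ} (hx : ∀ h, h % 2 ≠ r % 2 → x h = 0)
    {h : ℕ} (hh : h % 2 ≠ (r + 1) % 2) : advance a b x h = 0 := by
  cases h with
  | zero => simp [advance, lowerShift, hx 1 (by omega)]
  | succ h => simp [advance, lowerShift, hx h (by omega), hx (h + 2) (by omega)]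

/-- Heights of lattice paths of a fixed length all have the same parity, so
log-concavity is only asked within one parity class, with steps of two. -/
def ParityLogConcave (x : ℕ → ℕ) : Prop :=
  ∀ p q, p ≤ q → p % 2 = q % 2 → x p * x (q + 2) ≤ x (p + 2) * x q

def ParityTP2 (u v : ℕ → ℕ) : Prop :=
  ∀ p q, p ≤ q → p % 2 = q % 2 → u q * v p ≤ u p * v q

lemma parityLogConcave_ite_eq_zero : ParityLogConcave fun h => if h = 0 then 1 else 0 := by
  intro p q _ _
  simp

namespace ParityLogConcave

variable {x : ℕ → ℕ}

lemma lowerShift (hx : ParityLogConcave x) : ParityLogConcave (lowerShift x) := by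
  rintro (_ | p) (_ | q) hpq hpar
  · simp [CatalanMatroid.lowerShift]
  · simp [CatalanMatroid.lowerShift]
  · omega
  · exact hx p q (by omega) (by omega)

lemma mul_le_mul_add_four (hx : ParityLogConcave x) {p q : ℕ} (hpq : p ≤ q)
    (hpar : p % 2 = q % 2) : x p * x (q + 4) ≤ x (p + 4) * x q := by
  rcases Nat.eq_or_lt_of_le hpq with rfl | hlt
  · rw [mul_comm]
  · calc x p * x (q + 4) ≤ x (p + 2) * x (q + 2) := hx p (q + 2) (by omega) (by omega)
      _ ≤ x (p + 4) * x q := hx (p + 2) q (by omega) (by omega)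

lemma add_shift (hx : ParityLogConcave x) (a b : ℕ) :
    ParityLogConcave fun h => a * x h + b * x (h + 2) := by
  intro p q hpq hpar
  have h₁ := Nat.mul_le_mul_left (a * a) (hx p q hpq hpar)
  have h₂ := Nat.mul_le_mul_left (b * b) (hx (p + 2) (q + 2) (by omega) (by omega))
  have h₃ := Nat.mul_le_mul_left (a * b) (hx.mul_le_mul_add_four hpq hpar)
  nlinarith

lemma advance (hx : ParityLogConcave x) (a b : ℕ) :
    ParityLogConcave (CatalanMatroid.advance a b x) := by
  rw [advance_eq_lowerShift]
  exact hx.lowerShift.add_shift a b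

lemma parityTP2_advance (hx : ParityLogConcave x) :
    ParityTP2 (CatalanMatroid.advance 0 1 x) (CatalanMatroid.advance 1 0 x) := by
  rintro (_ | p) (_ | q) hpq hpar
  · simp [CatalanMatroid.advance, CatalanMatroid.lowerShift]
  · simp [CatalanMatroid.advance, CatalanMatroid.lowerShift]
  · omega
  · simpa [CatalanMatroid.advance, CatalanMatroid.lowerShift, mul_comm (x (q + 2))]
      using hx p q (by omega) (by omega)

end ParityLogConcave

namespace ParityTP2

variable {u v : ℕ → ℕ}

lemma lowerShift (huv : ParityTP2 u v) : ParityTP2 (lowerShift u) (lowerShift v) := by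
  rintro (_ | p) (_ | q) hpq hpar
  · simp [CatalanMatroid.lowerShift]
  · simp [CatalanMatroid.lowerShift]
  · omega
  · exact huv p q (by omega) (by omega)

lemma add_shift (huv : ParityTP2 u v) (a b : ℕ) :
    ParityTP2 (fun h => a * u h + b * u (h + 2)) (fun h => a * v h + b * v (h + 2)) := by
  intro p q hpq hpar
  have h₁ := Nat.mul_le_mul_left (a * a) (huv p q hpq hpar)
  have h₂ := Nat.mul_le_mul_left (b * b) (huv (p + 2) (q + 2) (by omega) (by omega))
  have h₃ : u q * v (p + 2) + u (q + 2) * v p ≤ u p * v (q + 2) + u (p + 2) * v q := by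
    rcases Nat.eq_or_lt_of_le hpq with rfl | hlt
    · rw [mul_comm (u p), mul_comm (u (p + 2)), add_comm]
    · exact add_le_add (huv (p + 2) q (by omega) (by omega))
        (huv p (q + 2) (by omega) (by omega)) |>.trans_eq (add_comm _ _)
  have h₃' := Nat.mul_le_mul_left (a * b) h₃
  nlinarith

lemma advance (huv : ParityTP2 u v) (a b : ℕ) :
    ParityTP2 (CatalanMatroid.advance a b u) (CatalanMatroid.advance a b v) := by
  rw [advance_eq_lowerShift, advance_eq_lowerShift]
  exact huv.lowerShift.add_shift a b

end ParityTP2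

theorem sum_mul_sum_le_sum_mul_sum {s : Finset ℕ} {α β u v : ℕ → ℕ} {r : ℕ}
    (hβα : ParityTP2 β α) (huv : ParityTP2 u v)
    (hα : ∀ h, h % 2 ≠ r → α h = 0) (hβ : ∀ h, h % 2 ≠ r → β h = 0) :
    (∑ h ∈ s, α h * u h) * (∑ h ∈ s, β h * v h) ≤
      (∑ h ∈ s, α h * v h) * (∑ h ∈ s, β h * u h) := by
  -- `pair h k` says `(α h * β k - α k * β h) * (v h * u k - u h * v k) ≥ 0`; summed over all
  -- pairs `(h, k)` it is twice the claim.
  have pair : ∀ h k, α h * u h * (β k * v k) + α k * u k * (β h * v h) ≤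
      α h * v h * (β k * u k) + α k * v k * (β h * u h) := by
    intro h k
    by_cases hpar : h % 2 = r ∧ k % 2 = r
    · rcases le_total h k with hle | hle
      · linarith [mul_add_mul_le_mul_add_mul (hβα h k hle (by omega)) (huv h k hle (by omega))]
      · linarith [mul_add_mul_le_mul_add_mul (hβα k h hle (by omega)) (huv k h hle (by omega))]
    · rcases not_and_or.1 hpar with hh | hk
      · simp [hα h hh, hβ h hh]
      · simp [hα k hk, hβ k hk]
  have := sum_le_sum fun h (_ : h ∈ s) => sum_le_sum fun k (_ : k ∈ s) => pair h k
  simp only [sum_add_distrib, ← mul_sum, ← sum_mul] at this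
  linarith

/-- `σ j` is the set of steps allowed at position `j` (`true` = up, `false` = down);
`prefixCount σ k h` counts the paths through positions `1, …, k` from height `0` to height `h`
that never go below `0`. -/
noncomputable def prefixCount (σ : ℕ → Set Bool) : ℕ → ℕ → ℕ
  | 0 => fun h => if h = 0 then 1 else 0
  | k + 1 => advance ((σ (k + 1)).indicator 1 true) ((σ (k + 1)).indicator 1 false)
      (prefixCount σ k)

/-- The number of paths through positions `k + 1, …, k + d` from height `h` to height `0`
that never go below `0`. -/
noncomputable def suffixCount (σ : ℕ → Set Bool) : ℕ → ℕ → ℕ → ℕ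
  | _, 0 => fun h => if h = 0 then 1 else 0
  | k, d + 1 => advance ((σ (k + 1)).indicator 1 false) ((σ (k + 1)).indicator 1 true)
      (suffixCount σ (k + 1) d)

variable {σ : ℕ → Set Bool}

lemma prefixCount_update_of_lt {j k : ℕ} (s : Set Bool) (hkj : k < j) :
    prefixCount (update σ j s) k = prefixCount σ k := by
  induction k with
  | zero => rfl
  | succ k ih =>
    simp only [prefixCount, update_of_ne (show k + 1 ≠ j by omega), ih (by omega)]

lemma suffixCount_update_of_le {j k : ℕ} (s : Set Bool) (d : ℕ) (hjk : j ≤ k) :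
    suffixCount (update σ j s) k d = suffixCount σ k d := by
  induction d generalizing k with
  | zero => rfl
  | succ d ih =>
    simp only [suffixCount, update_of_ne (show k + 1 ≠ j by omega), ih (by omega : j ≤ k + 1)]

lemma prefixCount_eq_zero_of_lt {k h : ℕ} (hkh : k < h) : prefixCount σ k h = 0 := by
  induction k generalizing h with
  | zero => simp [prefixCount]; omega
  | succ k ih => exact advance_eq_zero_of_lt (fun h hh => ih hh) hkh

lemma suffixCount_eq_zero_of_lt {k d h : ℕ} (hdh : d < h) : suffixCount σ k d h = 0 := by
  induction d generalizing k h with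
  | zero => simp [suffixCount]; omega
  | succ d ih => exact advance_eq_zero_of_lt (fun h hh => ih hh) hdh

lemma prefixCount_eq_zero_of_mod_two_ne {k h : ℕ} (hkh : h % 2 ≠ k % 2) :
    prefixCount σ k h = 0 := by
  induction k generalizing h with
  | zero => simp [prefixCount]; omega
  | succ k ih => exact advance_eq_zero_of_mod_two_ne (fun h hh => ih hh) hkh

lemma parityLogConcave_prefixCount (k : ℕ) : ParityLogConcave (prefixCount σ k) := by
  induction k with
  | zero => exact parityLogConcave_ite_eq_zero
  | succ k ih => exact ih.advance _ _

lemma parityLogConcave_suffixCount (k d : ℕ) : ParityLogConcave (suffixCount σ k d) := by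
  induction d generalizing k with
  | zero => exact parityLogConcave_ite_eq_zero
  | succ d ih => exact (ih (k + 1)).advance _ _

lemma parityTP2_suffixCount_update {k d f : ℕ} (hkf : k < f) (hfd : f ≤ k + d) :
    ParityTP2 (suffixCount (update σ f {true}) k d) (suffixCount (update σ f {false}) k d) := by
  induction d generalizing k with
  | zero => omega
  | succ d ih =>
    simp only [suffixCount]
    rcases Nat.eq_or_lt_of_le (show k + 1 ≤ f by omega) with rfl | hlt
    · simpa [suffixCount_update_of_le _ d le_rfl] using
        (parityLogConcave_suffixCount (σ := σ) (k + 1) d).parityTP2_advance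
    · simp only [update_of_ne (show k + 1 ≠ f by omega)]
      exact (ih hlt (by omega)).advance _ _

theorem prefixCount_add_eq_sum {k d R : ℕ} (hR : k + d < R) :
    prefixCount σ (k + d) 0 = ∑ h ∈ range R, prefixCount σ k h * suffixCount σ k d h := by
  induction d generalizing k with
  | zero => simp [suffixCount]; omega
  | succ d ih =>
    rw [suffixCount, ← sum_advance_mul (prefixCount_eq_zero_of_lt (by omega))
      (suffixCount_eq_zero_of_lt (by omega)), show k + (d + 1) = k + 1 + d by omega,
      ih (by omega)]
    rfl

lemma prefixCount_update_update_eq_sum {k d f : ℕ} (hkf : k + 1 < f) (a b : Bool) :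
    prefixCount (update (update σ (k + 1) {a}) f {b}) (k + 1 + d) 0 =
      ∑ h ∈ range (k + d + 2), advance (cond a 1 0) (cond a 0 1) (prefixCount σ k) h *
        suffixCount (update σ f {b}) (k + 1) d h := by
  rw [prefixCount_add_eq_sum (by omega : k + 1 + d < k + d + 2)]
  refine sum_congr rfl fun h _ => ?_
  rw [update_comm (by omega : k + 1 ≠ f), suffixCount_update_of_le _ _ le_rfl,
    ← update_comm (by omega : k + 1 ≠ f)]
  cases a <;> simp [prefixCount, update_of_ne (show k + 1 ≠ f by omega),
    prefixCount_update_of_lt _ (show k < f by omega), prefixCount_update_of_lt _ k.lt_succ_self]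

theorem prefixCount_update_update_mul_le {N e f : ℕ} (he : 0 < e) (hf : 0 < f) (heN : e ≤ N)
    (hfN : f ≤ N) (hef : e ≠ f) :
    prefixCount (update (update σ e {true}) f {true}) N 0 *
        prefixCount (update (update σ e {false}) f {false}) N 0 ≤
      prefixCount (update (update σ e {true}) f {false}) N 0 *
        prefixCount (update (update σ e {false}) f {true}) N 0 := by
  wlog hlt : e < f generalizing e f
  · have := this hf he hfN heN hef.symm (by omega)
    simp only [update_comm hef.symm] at this
    linarith
  obtain ⟨k, rfl⟩ : ∃ k, e = k + 1 := ⟨e - 1, by omega⟩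
  obtain ⟨d, rfl⟩ : ∃ d, N = k + 1 + d := ⟨N - (k + 1), by omega⟩
  simp only [prefixCount_update_update_eq_sum hlt, cond_true, cond_false]
  have hpar : ∀ a b h, h % 2 ≠ (k + 1) % 2 → advance a b (prefixCount σ k) h = 0 :=
    fun _ _ _ => advance_eq_zero_of_mod_two_ne fun _ => prefixCount_eq_zero_of_mod_two_ne
  exact sum_mul_sum_le_sum_mul_sum (parityLogConcave_prefixCount k).parityTP2_advance
    (parityTP2_suffixCount_update (by omega) (by omega)) (hpar 1 0) (hpar 0 1)

/-- A set `P ⊆ {1, …, k}` of up-step positions is a path that never goes below `0`, ends at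
height `h`, and takes at each position `j` a step allowed by `σ j`. -/
def IsDyckPrefix (σ : ℕ → Set Bool) (k h : ℕ) (P : Finset ℕ) : Prop :=
  2 * #P = k + h ∧ ∀ j ∈ Icc 1 k, j ≤ 2 * #(P ∩ Icc 1 j) ∧ decide (j ∈ P) ∈ σ j

noncomputable def dyckPrefixes (σ : ℕ → Set Bool) (k h : ℕ) : Finset (Finset ℕ) :=
  (Icc 1 k).powerset.filter (IsDyckPrefix σ k h)

lemma forall_mem_Icc_add_one {p : ℕ → Prop} {k : ℕ} :
    (∀ j ∈ Icc 1 (k + 1), p j) ↔ (∀ j ∈ Icc 1 k, p j) ∧ p (k + 1) := by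
  rw [← insert_Icc_right_eq_Icc_add_one (by omega), forall_mem_insert, and_comm]

lemma isDyckPrefix_add_one_iff {k h : ℕ} {P : Finset ℕ} (hP : P ⊆ Icc 1 k) :
    IsDyckPrefix σ (k + 1) h P ↔ false ∈ σ (k + 1) ∧ IsDyckPrefix σ k (h + 1) P := by
  have hk : k + 1 ∉ P := fun hk => by simpa using hP hk
  have hPk : P ∩ Icc 1 (k + 1) = P := inter_eq_left.2 (hP.trans (Icc_subset_Icc_right k.le_succ))
  simp only [IsDyckPrefix, forall_mem_Icc_add_one, hPk, hk, decide_false]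
  constructor
  · rintro ⟨hcard, hpre, -, hσ⟩
    exact ⟨hσ, by omega, hpre⟩
  · rintro ⟨hσ, hcard, hpre⟩
    exact ⟨by omega, hpre, by omega, hσ⟩

lemma isDyckPrefix_insert_iff {k h : ℕ} {P : Finset ℕ} (hP : P ⊆ Icc 1 k) :
    IsDyckPrefix σ (k + 1) h (insert (k + 1) P) ↔
      true ∈ σ (k + 1) ∧ 0 < h ∧ IsDyckPrefix σ k (h - 1) P := by
  have hk : k + 1 ∉ P := fun hk => by simpa using hP hk
  have hlow : (∀ j ∈ Icc 1 k, j ≤ 2 * #(insert (k + 1) P ∩ Icc 1 j) ∧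
      decide (j ∈ insert (k + 1) P) ∈ σ j) ↔
      ∀ j ∈ Icc 1 k, j ≤ 2 * #(P ∩ Icc 1 j) ∧ decide (j ∈ P) ∈ σ j := by
    refine forall₂_congr fun j hj => ?_
    simp only [mem_Icc] at hj
    rw [insert_inter_of_notMem (by simp; omega)]
    simp [show j ≠ k + 1 by omega]
  have htop : insert (k + 1) P ∩ Icc 1 (k + 1) = insert (k + 1) P :=
    inter_eq_left.2 (insert_subset (by simp) (hP.trans (Icc_subset_Icc_right k.le_succ)))
  rw [IsDyckPrefix, IsDyckPrefix, forall_mem_Icc_add_one, hlow, htop,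
    card_insert_of_notMem hk]
  simp only [mem_insert_self, decide_true]
  constructor
  · rintro ⟨hcard, hpre, -, hσ⟩
    have : k ≤ 2 * #P := by
      rcases k.eq_zero_or_pos with rfl | hk0
      · simp
      · simpa [inter_eq_left.2 hP] using (hpre k (by simp; omega)).1
    exact ⟨hσ, by omega, by omega, hpre⟩
  · rintro ⟨hσ, hh, hcard, hpre⟩
    exact ⟨by omega, hpre, by omega, hσ⟩

theorem card_dyckPrefixes (σ : ℕ → Set Bool) (k h : ℕ) :
    #(dyckPrefixes σ k h) = prefixCount σ k h := by
  induction k generalizing h with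
  | zero => simp [dyckPrefixes, IsDyckPrefix, prefixCount, filter_singleton, eq_comm, apply_ite]
  | succ k ih =>
    have hk : k + 1 ∉ Icc 1 k := by simp
    rw [dyckPrefixes, card_filter, ← insert_Icc_right_eq_Icc_add_one (by omega),
      sum_powerset_insert hk]
    have hdown : ∑ P ∈ (Icc 1 k).powerset, (if IsDyckPrefix σ (k + 1) h P then 1 else 0) =
        (σ (k + 1)).indicator 1 false * prefixCount σ k (h + 1) := by
      rw [← ih, dyckPrefixes, card_filter, mul_sum]
      refine sum_congr rfl fun P hP => ?_
      by_cases hσ : false ∈ σ (k + 1) <;>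
        simp [isDyckPrefix_add_one_iff (mem_powerset.1 hP), hσ]
    have hup : ∑ P ∈ (Icc 1 k).powerset,
        (if IsDyckPrefix σ (k + 1) h (insert (k + 1) P) then 1 else 0) =
        (σ (k + 1)).indicator 1 true * lowerShift (prefixCount σ k) h := by
      cases h with
      | zero =>
        refine (sum_eq_zero fun P hP => ?_).trans (by simp [lowerShift])
        simp [isDyckPrefix_insert_iff (mem_powerset.1 hP)]
      | succ h =>
        rw [lowerShift, ← ih, dyckPrefixes, card_filter, mul_sum]
        refine sum_congr rfl fun P hP => ?_
        by_cases hσ : true ∈ σ (k + 1) <;>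
          simp [isDyckPrefix_insert_iff (mem_powerset.1 hP), hσ]
    rw [hdown, hup, prefixCount, advance, add_comm]

lemma filter_dyck_eq_dyckPrefixes {n : ℕ} {p : Finset ℕ → Prop} [DecidablePred p]
    (hp : ∀ S ⊆ Icc 1 (2 * n), p S ↔ ∀ j ∈ Icc 1 (2 * n), decide (j ∈ S) ∈ σ j) :
    (dyck n).filter p = dyckPrefixes σ (2 * n) 0 := by
  ext S
  simp only [dyck, dyckPrefixes, IsDyckPrefix, mem_filter, mem_powerset]
  constructor
  · rintro ⟨⟨hS, hcard, hpre⟩, hpS⟩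
    exact ⟨hS, by omega, fun j hj => ⟨hpre j hj, (hp S hS).1 hpS j hj⟩⟩
  · rintro ⟨hS, hcard, hpre⟩
    exact ⟨⟨hS, by omega, fun j hj => (hpre j hj).1⟩, (hp S hS).2 fun j hj => (hpre j hj).2⟩

/-- The steps allowed in the minor obtained by contracting `I` and deleting `J`. -/
def minorSteps (I J : Finset ℕ) (j : ℕ) : Set Bool :=
  {b | (j ∈ I → b = true) ∧ (j ∈ J → b = false)}

lemma forall_decide_mem_minorSteps_iff {N : ℕ} {I J S : Finset ℕ} (hI : I ⊆ Icc 1 N)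
    (hJ : J ⊆ Icc 1 N) :
    (∀ j ∈ Icc 1 N, decide (j ∈ S) ∈ minorSteps I J j) ↔ I ⊆ S ∧ Disjoint S J := by
  simp only [minorSteps, Set.mem_ofPred_eq, decide_eq_true_iff, decide_eq_false_iff_not]
  constructor
  · intro h
    exact ⟨fun j hj => (h j (hI hj)).1 hj,
      disjoint_left.2 fun j hjS hjJ => (h j (hJ hjJ)).2 hjJ hjS⟩
  · rintro ⟨hIS, hSJ⟩ j -
    exact ⟨fun hj => hIS hj, fun hj hjS => disjoint_left.1 hSJ hjS hj⟩

lemma forall_decide_mem_update_iff {N e : ℕ} {τ : ℕ → Set Bool} {S : Finset ℕ} (a : Bool)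
    (he : e ∈ Icc 1 N) (hτ : τ e = Set.univ) :
    (∀ j ∈ Icc 1 N, decide (j ∈ S) ∈ update τ e {a} j) ↔
      (∀ j ∈ Icc 1 N, decide (j ∈ S) ∈ τ j) ∧ (e ∈ S ↔ a = true) := by
  constructor
  · intro h
    refine ⟨fun j hj => ?_, ?_⟩
    · by_cases hje : j = e
      · rw [hje, hτ]
        exact Set.mem_univ _
      · simpa [update_of_ne hje] using h j hj
    · have := h e he
      cases a <;> simpa using this
  · rintro ⟨h, hea⟩ j hj
    by_cases hje : j = e
    · subst hje
      cases a <;> simpa using hea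
    · simpa [update_of_ne hje] using h j hj

lemma card_mul_card_filter_and_le {α : Type*} (s : Finset α) (p q : α → Prop)
    [DecidablePred p] [DecidablePred q]
    (h : #(s.filter fun x => p x ∧ q x) * #(s.filter fun x => ¬p x ∧ ¬q x) ≤
      #(s.filter fun x => p x ∧ ¬q x) * #(s.filter fun x => ¬p x ∧ q x)) :
    #s * #(s.filter fun x => p x ∧ q x) ≤ #(s.filter p) * #(s.filter q) := by
  have hp : #(s.filter p) = #(s.filter fun x => p x ∧ q x) + #(s.filter fun x => p x ∧ ¬q x) := by
    rw [← card_filter_add_card_filter_not q (s := s.filter p), filter_filter, filter_filter]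
  have hnp : #(s.filter fun x => ¬p x) =
      #(s.filter fun x => ¬p x ∧ q x) + #(s.filter fun x => ¬p x ∧ ¬q x) := by
    rw [← card_filter_add_card_filter_not q (s := s.filter fun x => ¬p x), filter_filter,
      filter_filter]
  have hq : #(s.filter q) = #(s.filter fun x => p x ∧ q x) + #(s.filter fun x => ¬p x ∧ q x) := by
    rw [← card_filter_add_card_filter_not p (s := s.filter q), filter_filter, filter_filter]
    simp only [and_comm]
  have hs : #s = #(s.filter p) + #(s.filter fun x => ¬p x) :=
    (card_filter_add_card_filter_not p).symm
  rw [hs, hp, hnp, hq]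
  nlinarith

lemma minorSteps_eq_univ {I J : Finset ℕ} {j : ℕ} (hj : j ∉ I ∪ J) :
    minorSteps I J j = Set.univ := by
  ext b
  simp_all [minorSteps]

lemma card_filter_minor_eq_prefixCount {n : ℕ} {I J : Finset ℕ} (hI : I ⊆ Icc 1 (2 * n))
    (hJ : J ⊆ Icc 1 (2 * n)) {e f : ℕ} (he : e ∈ Icc 1 (2 * n) \ (I ∪ J))
    (hf : f ∈ Icc 1 (2 * n) \ (I ∪ J)) (hef : e ≠ f) (a b : Bool) :
    #(((dyck n).filter fun S => I ⊆ S ∧ Disjoint S J).filter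
        fun S => (e ∈ S ↔ a = true) ∧ (f ∈ S ↔ b = true)) =
      prefixCount (update (update (minorSteps I J) e {a}) f {b}) (2 * n) 0 := by
  obtain ⟨heN, heIJ⟩ := mem_sdiff.1 he
  obtain ⟨hfN, hfIJ⟩ := mem_sdiff.1 hf
  rw [filter_filter, ← card_dyckPrefixes, filter_dyck_eq_dyckPrefixes fun S _ => ?_]
  rw [forall_decide_mem_update_iff b hfN (by rw [update_of_ne hef.symm, minorSteps_eq_univ hfIJ]),
    forall_decide_mem_update_iff a heN (minorSteps_eq_univ heIJ),
    forall_decide_mem_minorSteps_iff hI hJ]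
  simp only [and_assoc]

end CatalanMatroid

open CatalanMatroid in
theorem catalanMatroid_balanced_general
    (n : ℕ)
    (I J : Finset ℕ) (hI : I ⊆ Finset.Icc 1 (2 * n)) (hJ : J ⊆ Finset.Icc 1 (2 * n))
    (e f : ℕ) (he : e ∈ Finset.Icc 1 (2 * n) \ (I ∪ J))
    (hf : f ∈ Finset.Icc 1 (2 * n) \ (I ∪ J)) (hef : e ≠ f) :
    (((dyck n).filter (fun S => I ⊆ S ∧ Disjoint S J)).filter (fun S => e ∈ S)).card *
      (((dyck n).filter (fun S => I ⊆ S ∧ Disjoint S J)).filter (fun S => f ∈ S)).card ≥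
    ((dyck n).filter (fun S => I ⊆ S ∧ Disjoint S J)).card *
      (((dyck n).filter (fun S => I ⊆ S ∧ Disjoint S J)).filter
        (fun S => e ∈ S ∧ f ∈ S)).card := by
  have hcount := card_filter_minor_eq_prefixCount hI hJ he hf hef
  have h11 := hcount true true
  have h10 := hcount true false
  have h01 := hcount false true
  have h00 := hcount false false
  simp only [iff_true, iff_false, Bool.false_eq_true] at h11 h10 h01 h00
  rw [ge_iff_le]
  apply card_mul_card_filter_and_le
  rw [h11, h10, h01, h00]
  obtain ⟨he₁, heN⟩ := mem_Icc.1 (mem_sdiff.1 he).1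
  obtain ⟨hf₁, hfN⟩ := mem_Icc.1 (mem_sdiff.1 hf).1
  exact prefixCount_update_update_mul_le he₁ hf₁ heN hfN hef

/-- The Catalan matroid is balanced: every minor (contract `I`, delete `J`)
satisfies negative correlation. -/
theorem catalanMatroid_balanced
    (n : ℕ) (hn : 1 ≤ n)
    (I J : Finset ℕ) (hI : I ⊆ Finset.Icc 1 (2 * n)) (hJ : J ⊆ Finset.Icc 1 (2 * n))
    (hIJ : Disjoint I J)
    (e f : ℕ) (he : e ∈ Finset.Icc 1 (2 * n) \ (I ∪ J))
    (hf : f ∈ Finset.Icc 1 (2 * n) \ (I ∪ J)) (hef : e ≠ f) :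
    (((dyck n).filter (fun S => I ⊆ S ∧ Disjoint S J)).filter (fun S => e ∈ S)).card *
      (((dyck n).filter (fun S => I ⊆ S ∧ Disjoint S J)).filter (fun S => f ∈ S)).card ≥
    ((dyck n).filter (fun S => I ⊆ S ∧ Disjoint S J)).card *
      (((dyck n).filter (fun S => I ⊆ S ∧ Disjoint S J)).filter
        (fun S => e ∈ S ∧ f ∈ S)).card :=
  catalanMatroid_balanced_general n I J hI hJ e f he hf hef
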